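/- Let G be a pentagraph, let C be a hole of length five in G, and let P be a local jump over C. Then the length of P is odd and at least three. -/

import Mathlib

open SimpleGraph

variable {V : Type*}

/-- A walk is an *induced (chordless) path* if it is a path and every edge of `G` joining
two of its vertices is an edge of the path. -/
def IsIndPath (G : SimpleGraph V) {u v : V} (p : G.Walk u v) : Prop :=
  p.IsPath ∧ ∀ x ∈ p.support, ∀ y ∈ p.support, G.Adj x y → s(x, y) ∈ p.edges

/-- The interior (set of internal vertices) of a walk from `u` to `v`. -/
def interiorSet {G : SimpleGraph V} {u v : V} (p : G.Walk u v) : Set V :=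
  {x | x ∈ p.support ∧ x ≠ u ∧ x ≠ v}

/-- An *induced cycle*: a cycle such that every edge of `G` joining two of its vertices is an
edge of the cycle. -/
def IsIndCycle (G : SimpleGraph V) {u : V} (c : G.Walk u u) : Prop :=
  c.IsCycle ∧ ∀ x ∈ c.support, ∀ y ∈ c.support, G.Adj x y → s(x, y) ∈ c.edges

/-- A *pentagraph*: every cycle has length at least five, and every induced cycle of odd
length has length exactly five. -/
def IsPentagraph (G : SimpleGraph V) : Prop :=
  (∀ (u : V) (c : G.Walk u u), c.IsCycle → 5 ≤ c.length) ∧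
  (∀ (u : V) (c : G.Walk u u), IsIndCycle G c → Odd c.length → c.length = 5)

/-- Removing the vertex set `X` disconnects `G`: two vertices outside `X` are not joined by
any path avoiding `X`. -/
def RemovalDisconnects (G : SimpleGraph V) (X : Set V) : Prop :=
  ∃ a b : ↥(Xᶜ), ¬ (G.induce Xᶜ).Reachable a b

/-- `G` admits a `P₃`-cutset: an induced three-vertex path whose deletion disconnects `G`. -/
def HasP3Cutset (G : SimpleGraph V) : Prop :=
  ∃ v₁ v₂ v₃ : V, G.Adj v₁ v₂ ∧ G.Adj v₂ v₃ ∧ ¬ G.Adj v₁ v₃ ∧ v₁ ≠ v₃ ∧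
    RemovalDisconnects G ({v₁, v₂, v₃} : Set V)

/-- `A` is (the vertex set of) a connected component of `G ∖ X`. -/
def IsCompOf (G : SimpleGraph V) (X : Set V) (A : Set V) : Prop :=
  A.Nonempty ∧ A ⊆ Xᶜ ∧ (G.induce A).Connected ∧
    ∀ u ∈ A, ∀ w ∈ Xᶜ, G.Adj u w → w ∈ A

/-- `G` admits a strong parity star-cutset. -/
def HasStrongParityStarCutset (G : SimpleGraph V) : Prop :=
  ∃ X : Set V, RemovalDisconnects G X ∧
    ∃ x ∈ X, (∀ y ∈ X, y ≠ x → G.Adj x y) ∧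
      ∃ A : Set V, IsCompOf G X A ∧
        (∀ y ∈ X, y ≠ x → ∀ z ∈ X, z ≠ x → y ≠ z →
          ∃ p : G.Walk y z, IsIndPath G p ∧ Even p.length ∧ interiorSet p ⊆ A) ∧
        (∃ a ∈ A, G.Adj x a)

/-- `G` admits a clique cutset. -/
def HasCliqueCutset (G : SimpleGraph V) : Prop :=
  ∃ X : Set V, G.IsClique X ∧ RemovalDisconnects G X

/-- Vertices of the Petersen graph: 2-element subsets of a 5-element set. -/
abbrev KVert : Type := {s : Finset (Fin 5) // s.card = 2}

/-- The Petersen graph, as the Kneser graph on 2-element subsets of a 5-element set. -/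
def petersen : SimpleGraph KVert where
  Adj a b := Disjoint (a : Finset (Fin 5)) (b : Finset (Fin 5))
  symm := ⟨fun a b h => Disjoint.symm h⟩
  loopless := by
    constructor
    intro a h
    rw [disjoint_self] at h
    have h2 := a.2
    simp [h] at h2

def pA : KVert := ⟨{0, 1}, by decide⟩
def pB : KVert := ⟨{2, 3}, by decide⟩

/-- The Petersen graph minus one edge. -/
def petersen0 : SimpleGraph KVert := petersen.deleteEdges {s(pA, pB)}

/-- The Petersen graph minus one vertex. -/
def petersen1 : SimpleGraph {x : KVert // x ≠ pA} := petersen.induce {x : KVert | x ≠ pA}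

/-- The Petersen graph minus two adjacent vertices. -/
def petersen2 : SimpleGraph {x : KVert // x ≠ pA ∧ x ≠ pB} :=
  petersen.induce {x : KVert | x ≠ pA ∧ x ≠ pB}

/-- Two nonadjacent vertices are *linked*: joined by two induced paths, both of length at
least three, of different parity. -/
def Linked (H : SimpleGraph V) (s t : V) : Prop :=
  ∃ (p q : H.Walk s t), IsIndPath H p ∧ IsIndPath H q ∧
    3 ≤ p.length ∧ 3 ≤ q.length ∧ p.length % 2 ≠ q.length % 2

/-- Two vertices are *odd-linked*: joined by an induced path of odd length at least five. -/
def OddLinked (H : SimpleGraph V) (s t : V) : Prop :=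
  ∃ p : H.Walk s t, IsIndPath H p ∧ Odd p.length ∧ 5 ≤ p.length

/-- A *jump* over a hole with vertex set `C`: an induced path whose ends are distinct,
nonadjacent vertices of `C` and whose other vertices avoid `C`. -/
def IsJump (G : SimpleGraph V) (C : Set V) {s t : V} (P : G.Walk s t) : Prop :=
  IsIndPath G P ∧ s ∈ C ∧ t ∈ C ∧ s ≠ t ∧ ¬ G.Adj s t ∧
    ∀ x ∈ P.support, x ∈ C → x = s ∨ x = t

/-- A jump *across* the vertex `c` of `C`. -/
def IsJumpAcross (G : SimpleGraph V) (C : Set V) {s t : V} (P : G.Walk s t) (c : V) : Prop :=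
  IsJump G C P ∧ c ∈ C ∧ G.Adj c s ∧ G.Adj c t

/-- A *local* jump: no vertex of `C` other than `c, s, t` has a neighbour in the interior. -/
def IsLocalJump (G : SimpleGraph V) (C : Set V) {s t : V} (P : G.Walk s t) : Prop :=
  IsJump G C P ∧ ∃ c : V, c ∈ C ∧ G.Adj c s ∧ G.Adj c t ∧
    ∀ x ∈ C, x ≠ c → x ≠ s → x ≠ t → ∀ y ∈ interiorSet P, ¬ G.Adj x y

/-- A *short* jump: a jump of length three. -/
def IsShortJump (G : SimpleGraph V) (C : Set V) {s t : V} (P : G.Walk s t) : Prop :=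
  IsJump G C P ∧ P.length = 3

/-- `G` is three-connected. -/
def ThreeConnected (G : SimpleGraph V) : Prop :=
  4 ≤ Nat.card V ∧ ∀ S : Set V, S.ncard < 3 → (G.induce Sᶜ).Connected

/-!
Since `s` and `t` have the common neighbour `c`, a path of length two from `s` to `t` would close
a 4-cycle through `c`, so `P` has length at least three. Deleting `c` from the hole leaves an
induced path `Q` of length three from `t` to `s`. Locality means that no interior vertex of `P`
sees an interior vertex of `Q`, so `P` followed by `Q` is an induced cycle of length
`|P| + 3 ≥ 6`; if `|P|` were even, this would be an odd hole longer than five.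
-/

namespace SimpleGraph.Walk

variable {G : SimpleGraph V}

lemma IsCycle.exists_eq_cons_concat {c : V} {cw : G.Walk c c} (hcw : cw.IsCycle) :
    ∃ (v p : V) (h : G.Adj c v) (q : G.Walk v p) (h' : G.Adj p c), cw = cons h (q.concat h') := by
  cases cw with
  | nil => exact absurd hcw not_isCycle_nil
  | cons h q =>
    have hq : ¬ q.Nil := fun hq => h.ne' hq.eq
    exact ⟨_, _, h, q.dropLast, q.adj_penultimate hq, by rw [concat_dropLast]⟩

lemma IsPath.start_notMem_support_tail {u v : V} {p : G.Walk u v} (hp : p.IsPath) :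
    u ∉ p.support.tail :=
  (List.nodup_cons.mp (p.cons_tail_support ▸ hp.support_nodup)).1

lemma IsPath.isCycle_append_cons_cons {s t c : V} {P : G.Walk s t} (hP : P.IsPath) (hst : s ≠ t)
    (hcs : G.Adj c s) (hct : G.Adj c t) (hcP : c ∉ P.support) :
    (P.append (cons hct.symm (cons hcs Walk.nil))).IsCycle := by
  refine hP.isCycle_append ?_ ?_ (Or.inr (by simp))
  · simp [cons_isPath_iff, hst.symm, hcs.ne, hct.ne']
  · simpa [hcP, hP.start_notMem_support_tail] using fun h => hcP (List.mem_of_mem_tail h)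

end SimpleGraph.Walk

section

variable {G : SimpleGraph V}

lemma IsIndPath.reverse {u v : V} {p : G.Walk u v} (hp : IsIndPath G p) :
    IsIndPath G p.reverse := by
  refine ⟨hp.1.reverse, fun x hx y hy hxy => ?_⟩
  simp only [Walk.support_reverse, List.mem_reverse, Walk.edges_reverse] at hx hy ⊢
  exact hp.2 x hx y hy hxy

lemma IsIndCycle.rotate [DecidableEq V] {u v : V} {c : G.Walk v v} (hc : IsIndCycle G c)
    (hu : u ∈ c.support) : IsIndCycle G (c.rotate u hu) := by
  refine ⟨hc.1.rotate hu, fun x hx y hy hxy => ?_⟩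
  rw [Walk.mem_support_rotate_iff] at hx hy
  exact (c.rotate_edges u hu).perm.mem_iff.mpr (hc.2 x hx y hy hxy)

lemma IsIndCycle.isIndPath_of_eq_cons_concat {c v p : V} {h : G.Adj c v} {q : G.Walk v p}
    {h' : G.Adj p c} (hcw : IsIndCycle G (.cons h (q.concat h'))) :
    IsIndPath G q ∧ c ∉ q.support := by
  obtain ⟨hcyc, hind⟩ := hcw
  have hpath := ((Walk.cons_isCycle_iff _ _).mp hcyc).1
  rw [Walk.concat_isPath_iff] at hpath
  refine ⟨⟨hpath.1, fun x hx y hy hxy => ?_⟩, hpath.2⟩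
  have hxc : x ≠ c := fun h => hpath.2 (h ▸ hx)
  have hyc : y ≠ c := fun h => hpath.2 (h ▸ hy)
  have := hind x (by simp [Walk.support_concat, hx]) y (by simp [Walk.support_concat, hy]) hxy
  simpa [Walk.edges_concat, hxc, hyc] using this

lemma IsIndCycle.exists_isIndPath_of_adj_of_adj {u c s t : V} {cw : G.Walk u u}
    (hcw : IsIndCycle G cw) (hc : c ∈ cw.support) (hs : s ∈ cw.support) (ht : t ∈ cw.support)
    (hcs : G.Adj c s) (hct : G.Adj c t) (hst : s ≠ t) :
    ∃ Q : G.Walk t s, IsIndPath G Q ∧ Q.length + 2 = cw.length ∧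
      ∀ x ∈ Q.support, x ∈ cw.support ∧ x ≠ c := by
  classical
  have hrot := hcw.rotate hc
  obtain ⟨v, p, h, q, h', hq⟩ := hrot.1.exists_eq_cons_concat
  rw [hq] at hrot
  obtain ⟨hqind, hcq⟩ := hrot.isIndPath_of_eq_cons_concat
  have hnbr : ∀ x ∈ cw.support, G.Adj c x → x = v ∨ x = p := by
    intro x hx hcx
    have hmem := (cw.rotate_edges c hc).perm.mem_iff.mpr (hcw.2 c hc x hx hcx)
    rw [hq] at hmem
    simp only [Walk.edges_cons, Walk.edges_concat, List.concat_eq_append, List.mem_cons,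
      List.mem_append, List.not_mem_nil, or_false, Sym2.eq_iff, true_and] at hmem
    rcases hmem with (hxv | ⟨-, rfl⟩) | hcxq | ⟨-, rfl⟩ | hxp
    · exact .inl hxv
    · exact (G.irrefl hcx).elim
    · exact absurd (q.fst_mem_support_of_mem_edges hcxq) hcq
    · exact (G.irrefl hcx).elim
    · exact .inr hxp
  have hlen : q.length + 2 = cw.length := by
    rw [← Walk.length_rotate cw c hc, hq]
    simp
  have hsupp : ∀ x ∈ q.support, x ∈ cw.support ∧ x ≠ c := by
    refine fun x hx => ⟨(cw.mem_support_rotate_iff c hc).mp ?_, fun h => hcq (h ▸ hx)⟩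
    rw [hq]
    simp [Walk.support_concat, hx]
  rcases hnbr s hs hcs, hnbr t ht hct with ⟨rfl | rfl, rfl | rfl⟩
  · exact absurd rfl hst
  · exact ⟨q.reverse, hqind.reverse, by simpa using hlen, by simpa using hsupp⟩
  · exact ⟨q, hqind, hlen, hsupp⟩
  · exact absurd rfl hst

lemma IsIndPath.isIndCycle_append {s t : V} {P : G.Walk s t} {Q : G.Walk t s}
    (hP : IsIndPath G P) (hQ : IsIndPath G Q) (hst : s ≠ t) (hnadj : ¬ G.Adj s t)
    (hPQ : ∀ x ∈ P.support, x ∈ Q.support → x = s ∨ x = t)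
    (hint : ∀ x ∈ interiorSet P, ∀ y ∈ interiorSet Q, ¬ G.Adj x y) :
    IsIndCycle G (P.append Q) := by
  have hPlen : 1 < P.length := by
    by_contra! h
    interval_cases hl : P.length
    exacts [hst (Walk.eq_of_length_eq_zero hl), hnadj (Walk.adj_of_length_eq_one hl)]
  have hcross : ∀ x ∈ P.support, ∀ y ∈ Q.support, G.Adj x y → s(x, y) ∈ P.edges ++ Q.edges := by
    intro x hx y hy hxy
    by_cases hyP : y ∈ P.support
    · exact List.mem_append_left _ (hP.2 x hx y hyP hxy)
    by_cases hxQ : x ∈ Q.support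
    · exact List.mem_append_right _ (hQ.2 x hxQ y hy hxy)
    refine absurd hxy (hint x ⟨hx, ?_, ?_⟩ y ⟨hy, ?_, ?_⟩) <;> rintro rfl
    exacts [hxQ Q.end_mem_support, hxQ Q.start_mem_support, hyP P.end_mem_support,
      hyP P.start_mem_support]
  refine ⟨hP.1.isCycle_append hQ.1 ?_ (.inl hPlen), fun x hx y hy hxy => ?_⟩
  · intro x hxP hxQ
    rcases hPQ x (List.mem_of_mem_tail hxP) (List.mem_of_mem_tail hxQ) with rfl | rfl
    exacts [hP.1.start_notMem_support_tail hxP, hQ.1.start_notMem_support_tail hxQ]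
  rw [Walk.mem_support_append_iff] at hx hy
  rw [Walk.edges_append]
  rcases hx with hx | hx <;> rcases hy with hy | hy
  · exact List.mem_append_left _ (hP.2 x hx y hy hxy)
  · exact hcross x hx y hy hxy
  · exact Sym2.eq_swap ▸ hcross y hy x hx hxy.symm
  · exact List.mem_append_right _ (hQ.2 x hx y hy hxy)

end

theorem local_jump_odd_length_general {V : Type*} (G : SimpleGraph V)
    (hG : IsPentagraph G)
    (w : V) (cw : G.Walk w w) (hcyc : IsIndCycle G cw) (hlen : cw.length = 5)
    {s t : V} (P : G.Walk s t) (hP : IsLocalJump G {x | x ∈ cw.support} P) :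
    Odd P.length ∧ 3 ≤ P.length := by
  obtain ⟨⟨hPind, hsC, htC, hst, hnadj, hPC⟩, c, hcC, hcs, hct, hlocal⟩ := hP
  have hcP : c ∉ P.support := fun h => (hPC c h hcC).elim hcs.ne hct.ne
  have h3 : 3 ≤ P.length := by
    have := hG.1 s _ (hPind.1.isCycle_append_cons_cons hst hcs hct hcP)
    simp only [Walk.length_append, Walk.length_cons, Walk.length_nil] at this
    omega
  obtain ⟨Q, hQind, hQlen, hQC⟩ := hcyc.exists_isIndPath_of_adj_of_adj hcC hsC htC hcs hct hst
  have hW : IsIndCycle G (P.append Q) := by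
    refine hPind.isIndCycle_append hQind hst hnadj (fun x hxP hxQ => hPC x hxP (hQC x hxQ).1) ?_
    rintro x hx y ⟨hyQ, hyt, hys⟩ hxy
    exact hlocal y (hQC y hyQ).1 (hQC y hyQ).2 hys hyt x hx hxy.symm
  have hQ3 : Q.length = 3 := by omega
  refine ⟨?_, h3⟩
  by_contra hodd
  have hWodd : Odd (P.append Q).length := by
    rw [Walk.length_append, hQ3]
    exact (Nat.not_odd_iff_even.mp hodd).add_odd (by decide)
  have := hG.2 s _ hW hWodd
  rw [Walk.length_append] at this
  omega

/-- every local jump over a pentagon in a pentagraph has odd length at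
least three. -/
theorem local_jump_odd_length {V : Type*} [Fintype V] (G : SimpleGraph V)
    (hG : IsPentagraph G)
    (w : V) (cw : G.Walk w w) (hcyc : IsIndCycle G cw) (hlen : cw.length = 5)
    {s t : V} (P : G.Walk s t) (hP : IsLocalJump G {x | x ∈ cw.support} P) :
    Odd P.length ∧ 3 ≤ P.length :=
  local_jump_odd_length_general G hG w cw hcyc hlen P hP
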